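/- (Computable policies are dense.) Let A and E be finite types with decidable equality (so that List (A × E) is Primcodable and computability of policies π : List (A × E) → A is Mathlib's Computable). For every CCS ξ, the set { V^π_ξ(ϵ) : π a computable policy } is dense in the set { V^π_ξ(ϵ) : π any policy } as subsets of ℝ; equivalently, for every policy π and every ε > 0 there is a computable policy π̃ with |V^{π̃}_ξ(ϵ) − V^π_ξ(ϵ)| < ε. -/

import Mathlib

open scoped Classical

/-- A history: a finite alternating sequence of action–percept pairs. -/
abbrev Hist (A E : Type*) := List (A × E)

/-- A policy maps histories to actions. -/
abbrev Policy (A E : Type*) := Hist A E → A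

/-- A chronological conditional semimeasure (CCS, environment):
values in `[0,1]`, and the chronological semimeasure condition. -/
structure CCS (A E : Type*) [Fintype E] where
  val : Hist A E → ℝ
  nonneg : ∀ h, 0 ≤ val h
  le_one : ∀ h, val h ≤ 1
  chrono : ∀ (h : Hist A E) (a : A), (∑ e : E, val (h ++ [(a, e)])) ≤ val h

/-- `Gam γ t = Γ_t = ∑_{i ≥ t} γ_i`, the discount normalization factor. -/
noncomputable def Gam (γ : ℕ → ℝ) (t : ℕ) : ℝ := ∑' i : ℕ, γ (t + i)

/-- Extend a history by a list of percepts, with actions chosen by the policy `π`. -/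
def extendH {A E : Type*} (π : Policy A E) : Hist A E → List E → Hist A E
  | h, [] => h
  | h, e :: es => extendH π (h ++ [(π h, e)]) es

/-- The value `V^π_ν(ae_{<t})` of policy `π` in environment `ν` given history `h = ae_{<t}`
(with `t = h.length + 1`); `0` whenever `Γ_t ≤ 0` or `ν(e_{<t} ∣ a_{<t}) ≤ 0`. -/
noncomputable def V {A E : Type*} [Fintype E] (γ : ℕ → ℝ) (r : E → ℝ)
    (π : Policy A E) (ν : CCS A E) (h : Hist A E) : ℝ :=
  if 0 < Gam γ (h.length + 1) ∧ 0 < ν.val h then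
    (1 / (Gam γ (h.length + 1) * ν.val h)) *
      ∑' n : ℕ, γ (h.length + 1 + n) *
        ∑ es : Fin (n + 1) → E,
          r (es (Fin.last n)) * ν.val (extendH π h (List.ofFn es))
  else 0

/-- The value `V^π_ν(h a)` of a history ending in the action `a`:
the action at time `t` is `a`, and `π` is followed from time `t+1` on. -/
noncomputable def Vact {A E : Type*} [Fintype E] (γ : ℕ → ℝ) (r : E → ℝ)
    (π : Policy A E) (ν : CCS A E) (h : Hist A E) (a : A) : ℝ :=
  V γ r (fun h' => if h' = h then a else π h') ν h

/-- The optimal value `V^*_ν(h) = sup_π V^π_ν(h)`. -/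
noncomputable def VOpt {A E : Type*} [Fintype E] (γ : ℕ → ℝ) (r : E → ℝ)
    (ν : CCS A E) (h : Hist A E) : ℝ :=
  ⨆ π : Policy A E, V γ r π ν h

/-- The optimal value `V^*_ν(h a)` of a history ending in an action. -/
noncomputable def VOptAct {A E : Type*} [Fintype E] (γ : ℕ → ℝ) (r : E → ℝ)
    (ν : CCS A E) (h : Hist A E) (a : A) : ℝ :=
  ⨆ π : Policy A E, Vact γ r π ν h a

/-- A history is consistent with `π` iff each of its actions is the one chosen by `π`. -/
def Consistent {A E : Type*} (π : Policy A E) (h : Hist A E) : Prop :=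
  ∀ (k : ℕ) (hk : k < h.length), (h.get ⟨k, hk⟩).1 = π (h.take k)

/-!
Rewards lie in `[0,1]` and, by the chronological condition, the total `ξ`-mass of the
percept sequences of any length is at most `ξ(ϵ)`. Hence the normalised value of a policy is
determined by its actions on histories of length `< M` up to the discounted tail
`Γ_{1+M} / Γ_1`, which tends to `0`. Truncating `π` after time `M` (playing a fixed action on
all longer histories) changes it only outside a finite set of histories, so the truncation is
a finite table lookup and therefore primitive recursive.
-/

open Filter Topology

theorem Primrec.of_eq_const_off_finite {α σ : Type*} [Primcodable α] [Primcodable σ]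
    [DecidableEq α] {f : α → σ} {s : Set α} (hs : s.Finite) (c : σ)
    (hf : ∀ a ∉ s, f a = c) : Primrec f := by
  let keys := hs.toFinset.toList
  refine ((Primrec.list_getD c).comp (Primrec.const (keys.map f))
    (Primrec.list_idxOf₁ keys)).of_eq fun a => ?_
  by_cases ha : a ∈ s
  · have hmem : a ∈ keys := by simpa [keys] using ha
    have hlt := List.idxOf_lt_length_of_mem hmem
    rw [List.getD_eq_getElem _ _ (by simpa using hlt), List.getElem_map, List.getElem_idxOf]
  · have hnmem : a ∉ keys := by simpa [keys] using ha
    rw [List.getD_eq_default _ _ (by simp [List.idxOf_eq_length_iff.2 hnmem]), hf a ha]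

theorem Gam_nonneg {γ : ℕ → ℝ} (hγ0 : ∀ t, 0 ≤ γ t) (t : ℕ) : 0 ≤ Gam γ t :=
  tsum_nonneg fun _ => hγ0 _

theorem tendsto_Gam_atTop (γ : ℕ → ℝ) : Tendsto (Gam γ) atTop (𝓝 0) :=
  (tendsto_sum_nat_add γ).congr fun t => by simp only [Gam, add_comm]

section Policies

variable {A E : Type*}

def Policy.truncate (π : Policy A E) (M : ℕ) (a : A) : Policy A E :=
  fun h => if h.length < M then π h else a

theorem Policy.truncate_of_length_lt (π : Policy A E) {M : ℕ} (a : A) {h : Hist A E}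
    (hh : h.length < M) : π.truncate M a h = π h :=
  if_pos hh

theorem Policy.computable_truncate [Finite A] [Finite E] [Primcodable A] [Primcodable E]
    (π : Policy A E) (M : ℕ) (a : A) : Computable (π.truncate M a) :=
  (Primrec.of_eq_const_off_finite (List.finite_length_lt (A × E) M) a
    fun _ hh => if_neg hh).to_comp

theorem extendH_congr {π π' : Policy A E} {N : ℕ}
    (hππ' : ∀ h : Hist A E, h.length < N → π h = π' h) (h : Hist A E) (es : List E)
    (hN : h.length + es.length ≤ N) : extendH π h es = extendH π' h es := by
  induction es generalizing h with
  | nil => rfl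
  | cons e es ih =>
    simp only [List.length_cons] at hN
    simp only [extendH, hππ' h (by omega)]
    exact ih _ (by simp only [List.length_append, List.length_singleton]; omega)

end Policies

section Value

variable {A E : Type*} [Fintype E]

theorem CCS.sum_extendH_le (ν : CCS A E) (π : Policy A E) (n : ℕ) (h : Hist A E) :
    ∑ es : Fin n → E, ν.val (extendH π h (List.ofFn es)) ≤ ν.val h := by
  induction n generalizing h with
  | zero => simp [extendH]
  | succ n ih =>
    calc ∑ es : Fin (n + 1) → E, ν.val (extendH π h (List.ofFn es))
        = ∑ e : E, ∑ es : Fin n → E,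
            ν.val (extendH π (h ++ [(π h, e)]) (List.ofFn es)) := by
          rw [← (Fin.consEquiv fun _ => E).sum_comp, Fintype.sum_prod_type]
          simp [List.ofFn_succ, extendH]
      _ ≤ ∑ e : E, ν.val (h ++ [(π h, e)]) := Finset.sum_le_sum fun e _ => ih _
      _ ≤ ν.val h := ν.chrono h (π h)

/-- The summand of `V γ r π ν h` at time `h.length + 1 + n`, before discounting and
normalisation by `Γ_t · ν(e_{<t} ∣ a_{<t})`. -/
noncomputable def rewardMass (r : E → ℝ) (π : Policy A E) (ν : CCS A E) (h : Hist A E)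
    (n : ℕ) : ℝ :=
  ∑ es : Fin (n + 1) → E, r (es (Fin.last n)) * ν.val (extendH π h (List.ofFn es))

variable {γ : ℕ → ℝ} {r : E → ℝ} {π π' : Policy A E} {ν : CCS A E} {h : Hist A E}

theorem rewardMass_nonneg (hr : ∀ e, 0 ≤ r e) (n : ℕ) : 0 ≤ rewardMass r π ν h n :=
  Finset.sum_nonneg fun _ _ => mul_nonneg (hr _) (ν.nonneg _)

theorem rewardMass_le (hr : ∀ e, r e ≤ 1) (n : ℕ) : rewardMass r π ν h n ≤ ν.val h :=
  (Finset.sum_le_sum fun _ _ => mul_le_of_le_one_left (ν.nonneg _) (hr _)).trans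
    (ν.sum_extendH_le π (n + 1) h)

theorem rewardMass_congr {n : ℕ}
    (hππ' : ∀ h' : Hist A E, h'.length < h.length + n + 1 → π h' = π' h') :
    rewardMass r π ν h n = rewardMass r π' ν h n :=
  Finset.sum_congr rfl fun es _ => by
    rw [extendH_congr hππ' h _ (by rw [List.length_ofFn]; omega)]

theorem V_eq_tsum (hpos : 0 < Gam γ (h.length + 1) ∧ 0 < ν.val h) :
    V γ r π ν h = (Gam γ (h.length + 1) * ν.val h)⁻¹ *
      ∑' n, γ (h.length + 1 + n) * rewardMass r π ν h n := by
  rw [V, if_pos hpos, one_div]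
  rfl

theorem summable_discounted_rewardMass (hγ0 : ∀ t, 0 ≤ γ t) (hγs : Summable γ)
    (hr : ∀ e, 0 ≤ r e ∧ r e ≤ 1) (t : ℕ) :
    Summable fun n => γ (t + n) * rewardMass r π ν h n :=
  ((hγs.comp_injective (add_right_injective t)).mul_right (ν.val h)).of_nonneg_of_le
    (fun n => mul_nonneg (hγ0 _) (rewardMass_nonneg (fun e => (hr e).1) n))
    (fun n => mul_le_mul_of_nonneg_left (rewardMass_le (fun e => (hr e).2) n) (hγ0 _))

theorem tsum_discounted_rewardMass_tail_mem (hγ0 : ∀ t, 0 ≤ γ t) (hγs : Summable γ)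
    (hr : ∀ e, 0 ≤ r e ∧ r e ≤ 1) (t M : ℕ) :
    ∑' n, γ (t + (n + M)) * rewardMass r π ν h (n + M) ∈
      Set.Icc 0 (ν.val h * Gam γ (t + M)) := by
  refine ⟨tsum_nonneg fun n => mul_nonneg (hγ0 _) (rewardMass_nonneg (fun e => (hr e).1) _),
    ?_⟩
  calc ∑' n, γ (t + (n + M)) * rewardMass r π ν h (n + M)
      ≤ ∑' n, ν.val h * γ (t + M + n) :=
        Summable.tsum_le_tsum (fun n => by
            rw [mul_comm, ← add_assoc, add_right_comm]
            exact mul_le_mul_of_nonneg_right (rewardMass_le (fun e => (hr e).2) _) (hγ0 _))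
          ((summable_nat_add_iff (f := fun n => γ (t + n) * rewardMass r π ν h n) M).2
            (summable_discounted_rewardMass hγ0 hγs hr t))
          ((hγs.comp_injective (add_right_injective (t + M))).mul_left _)
    _ = ν.val h * Gam γ (t + M) := tsum_mul_left

theorem abs_V_sub_V_le (hγ0 : ∀ t, 0 ≤ γ t) (hγs : Summable γ)
    (hr : ∀ e, 0 ≤ r e ∧ r e ≤ 1)
    {M : ℕ} (hππ' : ∀ h' : Hist A E, h'.length < h.length + M → π h' = π' h') :
    |V γ r π ν h - V γ r π' ν h| ≤ Gam γ (h.length + 1 + M) / Gam γ (h.length + 1) := by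
  by_cases hpos : 0 < Gam γ (h.length + 1) ∧ 0 < ν.val h
  swap
  · rw [V, V, if_neg hpos, if_neg hpos, sub_zero, abs_zero]
    exact div_nonneg (Gam_nonneg hγ0 _) (Gam_nonneg hγ0 _)
  have hsplit (ρ : Policy A E) :=
    ((summable_discounted_rewardMass (π := ρ) (ν := ν) (h := h) hγ0 hγs hr
      (h.length + 1)).sum_add_tsum_nat_add M).symm
  have hhead : ∑ n ∈ Finset.range M, γ (h.length + 1 + n) * rewardMass r π ν h n
      = ∑ n ∈ Finset.range M, γ (h.length + 1 + n) * rewardMass r π' ν h n :=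
    Finset.sum_congr rfl fun n hn => congrArg _ <| rewardMass_congr fun h' hh' =>
      hππ' h' (by have := Finset.mem_range.1 hn; omega)
  obtain ⟨htail₀, htail₁⟩ :=
    tsum_discounted_rewardMass_tail_mem (π := π) (ν := ν) (h := h) hγ0 hγs hr _ M
  obtain ⟨htail₀', htail₁'⟩ :=
    tsum_discounted_rewardMass_tail_mem (π := π') (ν := ν) (h := h) hγ0 hγs hr _ M
  rw [V_eq_tsum hpos, V_eq_tsum hpos, ← mul_sub, hsplit π, hsplit π', hhead,
    add_sub_add_left_eq_sub]
  have hc : 0 < Gam γ (h.length + 1) * ν.val h := mul_pos hpos.1 hpos.2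
  calc |(Gam γ (h.length + 1) * ν.val h)⁻¹ * (_ - _)|
      ≤ (Gam γ (h.length + 1) * ν.val h)⁻¹ * (ν.val h * Gam γ (h.length + 1 + M)) := by
        rw [abs_mul, abs_of_pos (inv_pos.2 hc)]
        exact mul_le_mul_of_nonneg_left
          (abs_sub_le_of_nonneg_of_le htail₀ htail₁ htail₀' htail₁') (inv_nonneg.2 hc.le)
    _ = Gam γ (h.length + 1 + M) / Gam γ (h.length + 1) := by
        field_simp [hpos.2.ne']

end Value

theorem computable_policies_dense_general {A E : Type*}
    [Fintype A] [Primcodable A]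
    [Fintype E] [Primcodable E]
    (γ : ℕ → ℝ) (hγ0 : ∀ t, 0 ≤ γ t) (hγs : Summable γ)
    (r : E → ℝ) (hr : ∀ e : E, 0 ≤ r e ∧ r e ≤ 1)
    (ξ : CCS A E) (π : Policy A E) (ε : ℝ) (hε : 0 < ε) :
    ∃ πt : Policy A E, Computable πt ∧
      |V γ r πt ξ [] - V γ r π ξ []| < ε := by
  have htail : Tendsto (fun M => Gam γ (1 + M) / Gam γ 1) atTop (𝓝 0) := by
    have h1M := ((tendsto_Gam_atTop γ).comp
      ((tendsto_add_atTop_nat 1).congr fun M => add_comm M 1)).div_const (Gam γ 1)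
    rwa [zero_div] at h1M
  obtain ⟨M, hM⟩ := (htail.eventually (gt_mem_nhds hε)).exists
  refine ⟨π.truncate M (π []), π.computable_truncate M (π []), ?_⟩
  have hbound := abs_V_sub_V_le (ν := ξ) (h := []) (r := r) (π := π.truncate M (π []))
    (π' := π) hγ0 hγs hr fun _ hh => π.truncate_of_length_lt _ (by simpa using hh)
  rw [List.length_nil, zero_add] at hbound
  exact hbound.trans_lt hM

/-- **Computable policies are dense**: for every policy and every `ε > 0` there is a
computable policy whose value at the empty history is `ε`-close. -/
theorem computable_policies_dense {A E : Type*}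
    [Fintype A] [Nonempty A] [DecidableEq A] [Primcodable A]
    [Fintype E] [Nonempty E] [DecidableEq E] [Primcodable E]
    (γ : ℕ → ℝ) (hγ0 : ∀ t, 0 ≤ γ t) (hγs : Summable γ)
    (r : E → ℝ) (hr : ∀ e : E, 0 ≤ r e ∧ r e ≤ 1)
    (ξ : CCS A E) (π : Policy A E) (ε : ℝ) (hε : 0 < ε) :
    ∃ πt : Policy A E, Computable πt ∧
      |V γ r πt ξ [] - V γ r π ξ []| < ε :=
  computable_policies_dense_general γ hγ0 hγs r hr ξ π ε hε
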